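/- Let R > 0 and let y ∈ ℝ³ with 0 < ‖y‖ < R, and set ȳ = (R²/‖y‖²) y. Then the function x ↦ log(2R²/(R² − ⟨x, y⟩ + ‖y‖·‖x − ȳ‖)) is harmonic on the open ball {x : ‖x‖ < R}; that is, it is smooth there and its Laplacian (the sum of its second partial derivatives in x) vanishes identically on the ball. -/

import Mathlib

open Real
open scoped RealInnerProductSpace

/-- The Euclidean Laplacian in `ℝ³`: the sum of the pure second partial derivatives. -/
noncomputable def laplacian (f : EuclideanSpace ℝ (Fin 3) → ℝ)
    (x : EuclideanSpace ℝ (Fin 3)) : ℝ :=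
  ∑ i : Fin 3,
    fderiv ℝ (fun z => fderiv ℝ f z (EuclideanSpace.single i (1 : ℝ))) x
      (EuclideanSpace.single i (1 : ℝ))

/-!
Since `⟪y, ȳ⟫ = R²`, the denominator is `h (x - ȳ)` with `h u = ‖y‖ ‖u‖ - ⟪u, y⟫`, and it is
positive on the ball because there `⟪x, y⟫ < R²`. Away from the origin `h` has gradient
`∇h = (‖y‖ / ‖u‖) u - y`, with `‖∇h‖² = 2 ‖y‖ h / ‖u‖`, and in dimension three
`Δh = ‖y‖ Δ‖u‖ = 2 ‖y‖ / ‖u‖`. Hence `Δ (log h) = Δh / h - ‖∇h‖² / h² = 0`.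
-/

open Filter Topology

section InnerProductSpace

variable {E : Type*} [NormedAddCommGroup E] [InnerProductSpace ℝ E] {a u : E}

theorem hasGradientAt_norm [CompleteSpace E] (hu : u ≠ 0) :
    HasGradientAt (‖·‖) (‖u‖⁻¹ • u) u := by
  have h := (hasStrictFDerivAt_norm_sq u).hasFDerivAt.sqrt (by positivity)
  simp only [Real.sqrt_sq (norm_nonneg _)] at h
  refine hasGradientAt_iff_hasFDerivAt.mpr (h.congr_fderiv ?_)
  ext v
  simp only [one_div, mul_inv_rev, smul_apply, coe_innerSL_apply, nsmul_eq_mul, Nat.cast_ofNat,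
    smul_eq_mul, map_smul, InnerProductSpace.toDual_apply_apply]
  field_simp

/-- Nonnegative, and zero exactly on the ray `ℝ≥0 • a`. -/
noncomputable def rayGap (a u : E) : ℝ := ‖a‖ * ‖u‖ - ⟪u, a⟫

noncomputable def rayGapGrad (a u : E) : E := (‖a‖ / ‖u‖) • u - a

theorem ne_zero_of_rayGap_pos (h : 0 < rayGap a u) : u ≠ 0 := by
  rintro rfl
  simp [rayGap] at h

theorem hasGradientAt_rayGap [CompleteSpace E] (hu : u ≠ 0) :
    HasGradientAt (rayGap a) (rayGapGrad a u) u := by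
  have h := ((hasGradientAt_norm hu).hasFDerivAt.const_mul ‖a‖).sub
    ((innerSL ℝ a).hasFDerivAt (x := u))
  refine (hasGradientAt_iff_hasFDerivAt.mpr (h.congr_fderiv ?_)).congr_of_eventuallyEq ?_
  · ext v
    simp only [map_smul, sub_apply, smul_apply, InnerProductSpace.toDual_apply_apply,
      smul_eq_mul, coe_innerSL_apply, rayGapGrad, map_sub, sub_left_inj]
    field_simp
  · filter_upwards with z
    simp [rayGap, real_inner_comm]

theorem eventually_hasGradientAt_rayGap [CompleteSpace E] (hu : u ≠ 0) :
    ∀ᶠ z in 𝓝 u, HasGradientAt (rayGap a) (rayGapGrad a z) z :=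
  (eventually_ne_nhds hu).mono fun _ hz => hasGradientAt_rayGap hz

theorem contDiffAt_rayGap {n : WithTop ℕ∞} (hu : u ≠ 0) : ContDiffAt ℝ n (rayGap a) u :=
  (contDiffAt_const.mul (contDiffAt_norm ℝ hu)).sub (contDiffAt_id.inner ℝ contDiffAt_const)

theorem norm_rayGapGrad_sq (hu : u ≠ 0) :
    ‖rayGapGrad a u‖ ^ 2 = 2 * ‖a‖ / ‖u‖ * rayGap a u := by
  have hu' : ‖u‖ ≠ 0 := norm_ne_zero_iff.mpr hu
  rw [rayGapGrad, rayGap, @norm_sub_sq_real, norm_smul, real_inner_smul_left,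
    Real.norm_of_nonneg (by positivity)]
  field_simp
  ring

theorem hasFDerivAt_rayGapGrad [CompleteSpace E] (hu : u ≠ 0) :
    HasFDerivAt (rayGapGrad a)
      (‖a‖ • (‖u‖⁻¹ • ContinuousLinearMap.id ℝ E
        - (‖u‖ ^ 3)⁻¹ • (innerSL ℝ u).smulRight u)) u := by
  have hu' : ‖u‖ ≠ 0 := norm_ne_zero_iff.mpr hu
  have hinv := (hasDerivAt_inv hu').comp_hasFDerivAt u (hasGradientAt_norm hu).hasFDerivAt
  have h := ((hinv.const_mul ‖a‖).smul (hasFDerivAt_id (𝕜 := ℝ) u)).sub_const a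
  refine (h.congr_fderiv ?_).congr_of_eventuallyEq ?_
  · ext v
    simp only [Function.comp_apply, map_smul, smul_smul, neg_mul, neg_smul, smul_neg, id_eq,
      add_apply, smul_apply, ContinuousLinearMap.id_apply, ContinuousLinearMap.smulRight_apply,
      neg_apply, InnerProductSpace.toDual_apply_apply, smul_eq_mul, sub_apply, coe_innerSL_apply]
    module
  · filter_upwards with z
    simp [rayGapGrad, div_eq_mul_inv]

theorem rayGap_sub_image_point (R : ℝ) (ha : a ≠ 0) (x : E) :
    rayGap a (x - (R ^ 2 / ‖a‖ ^ 2) • a) =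
      R ^ 2 - ⟪x, a⟫ + ‖a‖ * ‖x - (R ^ 2 / ‖a‖ ^ 2) • a‖ := by
  have ha' : ‖a‖ ≠ 0 := norm_ne_zero_iff.mpr ha
  rw [rayGap, inner_sub_left, real_inner_smul_left, real_inner_self_eq_norm_sq]
  field_simp
  ring

theorem rayGap_sub_image_point_pos {R : ℝ} {x : E} (ha : a ≠ 0) (hx : ‖x‖ < R)
    (haR : ‖a‖ < R) : 0 < rayGap a (x - (R ^ 2 / ‖a‖ ^ 2) • a) := by
  have hinner : ⟪x, a⟫ < R ^ 2 := (real_inner_le_norm x a).trans_lt <| by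
    nlinarith [norm_nonneg x, norm_nonneg a]
  rw [rayGap_sub_image_point R ha]
  nlinarith [norm_nonneg a, norm_nonneg (x - (R ^ 2 / ‖a‖ ^ 2) • a)]

end InnerProductSpace

local notation "ℝ³" => EuclideanSpace ℝ (Fin 3)

theorem laplacian_congr_nhds {f g : ℝ³ → ℝ} {x : ℝ³} (h : f =ᶠ[𝓝 x] g) :
    laplacian f x = laplacian g x := by
  refine Finset.sum_congr rfl fun i _ => ?_
  have hpartial : (fun z => fderiv ℝ f z (EuclideanSpace.single i 1)) =ᶠ[𝓝 x]
      fun z => fderiv ℝ g z (EuclideanSpace.single i 1) :=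
    (h.fderiv (𝕜 := ℝ)).mono fun z hz => by simp only [hz]
  rw [hpartial.fderiv_eq]

theorem laplacian_const_sub (c : ℝ) (f : ℝ³ → ℝ) (x : ℝ³) :
    laplacian (fun z => c - f z) x = -laplacian f x := by
  simp [laplacian, fderiv_const_sub, fderiv_fun_neg]

theorem laplacian_comp_sub_const (f : ℝ³ → ℝ) (c x : ℝ³) :
    laplacian (fun z => f (z - c)) x = laplacian f (x - c) := by
  simp only [laplacian, fderiv_comp_sub c (f := f)]
  refine Finset.sum_congr rfl fun i _ => ?_
  rw [fderiv_comp_sub c (f := fun w => fderiv ℝ f w _)]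

theorem laplacian_eq_sum_of_hasGradientAt {f : ℝ³ → ℝ} {G : ℝ³ → ℝ³} {G' : ℝ³ →L[ℝ] ℝ³}
    {x : ℝ³} (hf : ∀ᶠ z in 𝓝 x, HasGradientAt f (G z) z) (hG : HasFDerivAt G G' x) :
    laplacian f x = ∑ i, G' (EuclideanSpace.single i 1) i := by
  refine Finset.sum_congr rfl fun i _ => ?_
  have hpartial : (fun z => fderiv ℝ f z (EuclideanSpace.single i 1)) =ᶠ[𝓝 x] fun z => G z i :=
    hf.mono fun z hz => by simp [hz.fderiv_apply, EuclideanSpace.inner_single_right]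
  have hGi : HasFDerivAt (fun z => G z i) ((EuclideanSpace.proj i).comp G') x :=
    (EuclideanSpace.proj (𝕜 := ℝ) i).hasFDerivAt.comp x hG
  rw [hpartial.fderiv_eq, hGi.fderiv]
  rfl

theorem laplacian_log {h : ℝ³ → ℝ} {G : ℝ³ → ℝ³} {G' : ℝ³ →L[ℝ] ℝ³} {x : ℝ³}
    (hh : ∀ᶠ z in 𝓝 x, HasGradientAt h (G z) z) (hG : HasFDerivAt G G' x) (hx : h x ≠ 0) :
    laplacian (fun z => log (h z)) x = laplacian h x / h x - ‖G x‖ ^ 2 / h x ^ 2 := by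
  have hne : ∀ᶠ z in 𝓝 x, h z ≠ 0 :=
    hh.self_of_nhds.differentiableAt.continuousAt.eventually_ne hx
  have hlog : ∀ᶠ z in 𝓝 x, HasGradientAt (fun z => log (h z)) ((h z)⁻¹ • G z) z := by
    filter_upwards [hh, hne] with z hz hz0
    refine hasGradientAt_iff_hasFDerivAt.mpr ((hz.hasFDerivAt.log hz0).congr_fderiv ?_)
    ext v
    simp
  have hquot := ((hasDerivAt_inv hx).comp_hasFDerivAt x hh.self_of_nhds.hasFDerivAt).smul hG
  rw [laplacian_eq_sum_of_hasGradientAt hlog hquot, laplacian_eq_sum_of_hasGradientAt hh hG,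
    EuclideanSpace.real_norm_sq_eq, Finset.sum_div, Finset.sum_div, ← Finset.sum_sub_distrib]
  refine Finset.sum_congr rfl fun i _ => ?_
  simp only [Function.comp_apply, neg_smul, add_apply, smul_apply,
    ContinuousLinearMap.smulRight_apply, neg_apply, InnerProductSpace.toDual_apply_apply,
    EuclideanSpace.inner_single_right, ringHom_apply, one_mul, smul_eq_mul, PiLp.add_apply,
    PiLp.smul_apply, PiLp.neg_apply]
  field_simp
  ring

theorem laplacian_rayGap (a : ℝ³) {u : ℝ³} (hu : u ≠ 0) :
    laplacian (rayGap a) u = 2 * ‖a‖ / ‖u‖ := by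
  have hu' : ‖u‖ ≠ 0 := norm_ne_zero_iff.mpr hu
  have hsq := EuclideanSpace.real_norm_sq_eq u
  rw [laplacian_eq_sum_of_hasGradientAt (eventually_hasGradientAt_rayGap hu)
    (hasFDerivAt_rayGapGrad hu)]
  simp only [Fin.sum_univ_three, Fin.isValue, smul_apply, sub_apply,
    ContinuousLinearMap.id_apply, ContinuousLinearMap.smulRight_apply, coe_innerSL_apply,
    EuclideanSpace.inner_single_right, ringHom_apply, one_mul, PiLp.smul_apply, PiLp.sub_apply,
    PiLp.single_eq_same, smul_eq_mul, mul_one] at hsq ⊢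
  field_simp
  linear_combination ‖a‖ * hsq

theorem laplacian_log_rayGap (a : ℝ³) {u : ℝ³} (hu : 0 < rayGap a u) :
    laplacian (fun z => log (rayGap a z)) u = 0 := by
  have hu0 := ne_zero_of_rayGap_pos hu
  rw [laplacian_log (eventually_hasGradientAt_rayGap hu0) (hasFDerivAt_rayGapGrad hu0) hu.ne',
    laplacian_rayGap a hu0, norm_rayGapGrad_sq hu0]
  field_simp
  ring

theorem log_term_harmonic (R : ℝ)
    (y : EuclideanSpace ℝ (Fin 3)) (hy0 : 0 < ‖y‖) (hyR : ‖y‖ < R) :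
    ContDiffOn ℝ (⊤ : ℕ∞)
      (fun x : EuclideanSpace ℝ (Fin 3) =>
        Real.log (2 * R ^ 2 / (R ^ 2 - ⟪x, y⟫ + ‖y‖ * ‖x - (R ^ 2 / ‖y‖ ^ 2) • y‖)))
      {x : EuclideanSpace ℝ (Fin 3) | ‖x‖ < R} ∧
    ∀ x : EuclideanSpace ℝ (Fin 3), ‖x‖ < R →
      laplacian
        (fun x : EuclideanSpace ℝ (Fin 3) =>
          Real.log (2 * R ^ 2 / (R ^ 2 - ⟪x, y⟫ + ‖y‖ * ‖x - (R ^ 2 / ‖y‖ ^ 2) • y‖)))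
        x = 0 := by
  have hy : y ≠ 0 := norm_pos_iff.mp hy0
  have hR : 0 < R := hy0.trans hyR
  simp only [← rayGap_sub_image_point R hy]
  set ybar := (R ^ 2 / ‖y‖ ^ 2) • y
  have hpos : ∀ x : ℝ³, ‖x‖ < R → 0 < rayGap y (x - ybar) :=
    fun x hx => rayGap_sub_image_point_pos hy hx hyR
  refine ⟨fun x hx => ?_, fun x hx => ?_⟩
  · have hgap : ContDiffAt ℝ (⊤ : ℕ∞) (fun z => rayGap y (z - ybar)) x :=
      (contDiffAt_rayGap (ne_zero_of_rayGap_pos (hpos x hx))).comp x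
        (contDiffAt_id.sub contDiffAt_const)
    exact ((contDiffAt_const.div hgap (hpos x hx).ne').log
      (div_pos (by positivity) (hpos x hx)).ne').contDiffWithinAt
  · have hsplit : (fun z => log (2 * R ^ 2 / rayGap y (z - ybar))) =ᶠ[𝓝 x]
        fun z => log (2 * R ^ 2) - log (rayGap y (z - ybar)) := by
      filter_upwards [(isOpen_lt continuous_norm continuous_const).mem_nhds hx] with z hz
      exact Real.log_div (by positivity) (hpos z hz).ne'
    rw [laplacian_congr_nhds hsplit, laplacian_const_sub,
      laplacian_comp_sub_const (fun u => log (rayGap y u)), laplacian_log_rayGap y (hpos x hx),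
      neg_zero]
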